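/- arXiv:1509.06143 — 8 statements merged into one kernel-verified Lean document; each statement's English description precedes it below -/
import Mathlib

section
/- Let (μ, W) be a matrix weight with μ ≠ 0. If S ∈ 𝒜 is skew-Hermitian (S* = −S), then S = 0. In other words, 𝒜 contains no non-zero skew-Hermitian elements. -/
open Matrix MeasureTheory ComplexOrder

/-! Pick a point `x` where `V := W x` is positive definite and `S V = V Sᴴ = -V S`. This
anticommutation forces `tr (S V S) = 0`, i.e. `tr (Sᴴ V S) = 0`; but `Sᴴ V S` is positive
semidefinite, so it vanishes, and since `V` is positive definite this leaves `S = 0`. -/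

theorem Matrix.trace_mul_mul_self_eq_zero_of_mul_eq_neg {n R : Type*} [Fintype n] [CommRing R]
    [NoZeroDivisors R] [CharZero R] {S V : Matrix n n R} (h : S * V = -(V * S)) :
    (S * V * S).trace = 0 := by
  have h_neg : (S * V * S).trace = -(S * V * S).trace :=
    calc (S * V * S).trace = -(V * S * S).trace := by rw [h, neg_mul, trace_neg]
      _ = -(S * V * S).trace := by rw [trace_mul_comm (V * S) S, Matrix.mul_assoc]
  exact add_self_eq_zero.mp (by nth_rewrite 2 [h_neg]; ring)

theorem Matrix.PosDef.eq_zero_of_conjTranspose_mul_mul_eq_zero {m n 𝕜 : Type*} [Fintype n]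
    [RCLike 𝕜] {A : Matrix n n 𝕜} (hA : A.PosDef) {B : Matrix n m 𝕜} (h : Bᴴ * A * B = 0) :
    B = 0 := by
  ext i j
  have h_col : star (B.col j) ⬝ᵥ (A *ᵥ B.col j) = 0 := by
    have h_entry : (Bᴴ * (A * B)) j j = 0 := by rw [← Matrix.mul_assoc, h, zero_apply]
    exact h_entry
  by_contra hB
  exact (hA.dotProduct_mulVec_pos fun h0 => hB (congrFun h0 i)).ne' h_col

theorem Matrix.PosDef.eq_zero_of_mul_eq_mul_conjTranspose_of_skew {n 𝕜 : Type*} [Fintype n]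
    [RCLike 𝕜] {V S : Matrix n n 𝕜} (hV : V.PosDef) (hskew : Sᴴ = -S)
    (hSV : S * V = V * Sᴴ) : S = 0 := by
  have h_anti : S * V = -(V * S) := by rw [hSV, hskew, Matrix.mul_neg]
  have h_trace : (Sᴴ * V * S).trace = 0 := by
    rw [hskew, neg_mul, neg_mul, trace_neg, trace_mul_mul_self_eq_zero_of_mul_eq_neg h_anti,
      neg_zero]
  have h_psd : (Sᴴ * V * S).PosSemidef := hV.posSemidef.conjTranspose_mul_mul_same S
  exact hV.eq_zero_of_conjTranspose_mul_mul_eq_zero (h_psd.trace_eq_zero_iff.mp h_trace)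

theorem no_skew_hermitian_in_A_general (N : ℕ)
    (μ : Measure ℝ) (hμ : μ ≠ 0)
    (W : ℝ → Matrix (Fin N) (Fin N) ℂ)
    (hWpos : ∀ᵐ x ∂μ, (W x).PosDef)
    (S : Matrix (Fin N) (Fin N) ℂ)
    (hskew : Sᴴ = -S)
    (hS : ∀ᵐ x ∂μ, S * W x = W x * Sᴴ) :
    S = 0 := by
  have : (ae μ).NeBot := ae_neBot.mpr hμ
  obtain ⟨x, hx_pos, hx_comm⟩ := (hWpos.and hS).exists
  exact hx_pos.eq_zero_of_mul_eq_mul_conjTranspose_of_skew hskew hx_comm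

/-- For a matrix weight `(μ, W)` with `μ ≠ 0`, the real vector space `𝒜` of matrices `T`
with `T W(x) = W(x) Tᴴ` μ-a.e. contains no non-zero skew-Hermitian element. -/
theorem no_skew_hermitian_in_A (N : ℕ) (hN : 1 ≤ N)
    (μ : Measure ℝ) [SigmaFinite μ] (hμ : μ ≠ 0)
    (W : ℝ → Matrix (Fin N) (Fin N) ℂ)
    (hWmeas : ∀ i j, Measurable fun x => W x i j)
    (hWpos : ∀ᵐ x ∂μ, (W x).PosDef)
    (S : Matrix (Fin N) (Fin N) ℂ)
    (hskew : Sᴴ = -S)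
    (hS : ∀ᵐ x ∂μ, S * W x = W x * Sᴴ) :
    S = 0 :=
  no_skew_hermitian_in_A_general N μ hμ W hWpos S hskew hS
end

section
/- Let (μ, W) be a matrix weight with μ ≠ 0. For T ∈ M_N(ℂ), the following are equivalent: (i) T ∈ 𝒜 and T* ∈ 𝒜 (i.e. T W(x) = W(x) T* and T* W(x) = W(x) T for μ-almost every x); (ii) T is Hermitian (T = T*) and T W(x) = W(x) T for μ-almost every x. That is, 𝒜 ∩ 𝒜* = A_h. -/
open Matrix MeasureTheory ComplexOrder

/-!
If `T W = W Tᴴ` and `Tᴴ W = W T`, the Hermitian matrix `H = i (T - Tᴴ)` anticommutes with `W`.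
Testing `H W + W H = 0` against an eigenvector `v` of `H` with eigenvalue `t` gives
`2 t ⟪v, W v⟫ = 0`, so every eigenvalue of `H` vanishes when `W` is positive definite, and
`T = Tᴴ`. As `μ ≠ 0`, one point where both relations hold and `W` is positive definite suffices.
-/

variable {n : Type*} [Fintype n]

theorem Matrix.IsHermitian.eq_zero_of_mul_eq_neg_mul_of_posDef {𝕜 : Type*} [RCLike 𝕜]
    {H W : Matrix n n 𝕜}
    (hH : H.IsHermitian) (hW : W.PosDef) (hHW : H * W = -(W * H)) : H = 0 := by
  by_contra hne
  obtain ⟨v, t, ht, hv, hHv⟩ := hH.exists_eigenvector_of_ne_zero hne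
  have hvH : star v ᵥ* H = (t : 𝕜) • star v := by
    rw [← hH.eq, ← star_mulVec, hHv, star_smul, star_trivial,
      RCLike.real_smul_eq_coe_smul (K := 𝕜)]
  have hvWv : (t : 𝕜) * (star v ⬝ᵥ (W *ᵥ v)) = -((t : 𝕜) * (star v ⬝ᵥ (W *ᵥ v))) := by
    simpa only [neg_mulVec, dotProduct_neg, ← mulVec_mulVec, dotProduct_mulVec (star v) H, hvH,
      hHv, mulVec_smul, smul_dotProduct, dotProduct_smul, RCLike.real_smul_eq_coe_smul (K := 𝕜),
      smul_eq_mul] using congrArg (fun M => star v ⬝ᵥ (M *ᵥ v)) hHW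
  have hQ := (hW.dotProduct_mulVec_pos hv).ne'
  simp [self_eq_neg, ht, hQ] at hvWv

theorem Matrix.eq_conjTranspose_of_mul_eq_mul_conjTranspose_of_posDef
    {T W : Matrix n n ℂ} (hW : W.PosDef)
    (hTW : T * W = W * Tᴴ) (hTW' : Tᴴ * W = W * T) : T = Tᴴ := by
  have hS : (Complex.I • (T - Tᴴ)).IsHermitian := by
    simp only [IsHermitian, conjTranspose_smul, conjTranspose_sub, conjTranspose_conjTranspose,
      Complex.star_def, Complex.conj_I]
    module
  have hSW : Complex.I • (T - Tᴴ) * W = -(W * (Complex.I • (T - Tᴴ))) := by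
    rw [Matrix.smul_mul, Matrix.mul_smul, sub_mul, mul_sub, hTW, hTW']
    module
  simpa [sub_eq_zero] using hS.eq_zero_of_mul_eq_neg_mul_of_posDef hW hSW

theorem A_cap_Astar_eq_Ah_general (N : ℕ)
    (μ : Measure ℝ) (hμ : μ ≠ 0)
    (W : ℝ → Matrix (Fin N) (Fin N) ℂ)
    (hWpos : ∀ᵐ x ∂μ, (W x).PosDef)
    (T : Matrix (Fin N) (Fin N) ℂ) :
    ((∀ᵐ x ∂μ, T * W x = W x * Tᴴ) ∧ (∀ᵐ x ∂μ, Tᴴ * W x = W x * T)) ↔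
      (T = Tᴴ ∧ ∀ᵐ x ∂μ, T * W x = W x * T) := by
  have : (ae μ).NeBot := ae_neBot.mpr hμ
  constructor
  · rintro ⟨hTW, hTW'⟩
    obtain ⟨x, hx, hx', hWx⟩ := (hTW.and (hTW'.and hWpos)).exists
    have hT := eq_conjTranspose_of_mul_eq_mul_conjTranspose_of_posDef hWx hx hx'
    exact ⟨hT, hTW.mono fun x hx => hx.trans (by rw [← hT])⟩
  · rintro ⟨hT, hTW⟩
    rw [← hT]
    exact ⟨hTW, hTW⟩

/-- For a matrix weight `(μ, W)` with `μ ≠ 0`: `T ∈ 𝒜 ∩ 𝒜*` if and only if `T` is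
Hermitian and commutes with `W(x)` μ-a.e., i.e. `𝒜 ∩ 𝒜* = A_h`. -/
theorem A_cap_Astar_eq_Ah (N : ℕ) (hN : 1 ≤ N)
    (μ : Measure ℝ) [SigmaFinite μ] (hμ : μ ≠ 0)
    (W : ℝ → Matrix (Fin N) (Fin N) ℂ)
    (hWmeas : ∀ i j, Measurable fun x => W x i j)
    (hWpos : ∀ᵐ x ∂μ, (W x).PosDef)
    (T : Matrix (Fin N) (Fin N) ℂ) :
    ((∀ᵐ x ∂μ, T * W x = W x * Tᴴ) ∧ (∀ᵐ x ∂μ, Tᴴ * W x = W x * T)) ↔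
      (T = Tᴴ ∧ ∀ᵐ x ∂μ, T * W x = W x * T) :=
  A_cap_Astar_eq_Ah_general N μ hμ W hWpos T
end

section
/- Let (μ, W) be a matrix weight with μ ≠ 0. Then 𝒜 is *-invariant (i.e., for every T ∈ 𝒜 also T* ∈ 𝒜) if and only if 𝒜 = A_h, i.e., if and only if for every T ∈ M_N(ℂ): T W(x) = W(x) T* for μ-almost every x ⟺ (T = T* and T W(x) = W(x) T for μ-almost every x). -/
/-!
If `T` and `Tᴴ` both lie in `𝒜`, then `S = T - Tᴴ` satisfies `S W = -W S` almost everywhere.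
A matrix anticommuting with a positive definite `W` is zero: it maps an eigenvector of `W` with
eigenvalue `λ > 0` to a vector `u` with `W u = -λ u`, which forces `u = 0`. Hence `T = Tᴴ`, and
on Hermitian matrices the defining relations of `𝒜` and of `A` coincide. Since `μ ≠ 0`, the
almost-everywhere hypotheses can be evaluated at a single point.
-/

open Matrix MeasureTheory ComplexOrder

namespace Matrix

variable {𝕜 n : Type*} [RCLike 𝕜] [Fintype n] {W : Matrix n n 𝕜}

lemma PosDef.eq_zero_of_mulVec_eq_neg_smul (hW : W.PosDef) {c : ℝ} (hc : 0 ≤ c) {u : n → 𝕜}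
    (hu : W *ᵥ u = -(c • u)) : u = 0 := by
  by_contra hne
  have hpos := hW.dotProduct_mulVec_pos hne
  rw [hu, dotProduct_neg, dotProduct_smul] at hpos
  have hnonneg : 0 ≤ c • (star u ⬝ᵥ u) := smul_nonneg hc (dotProduct_star_self_nonneg u)
  exact (neg_nonpos.mpr hnonneg).not_gt hpos

lemma PosDef.eq_zero_of_mul_eq_neg_mul [DecidableEq n] (hW : W.PosDef) {S : Matrix n n 𝕜}
    (h : S * W = -(W * S)) : S = 0 := by
  apply (toLpLin 2 2).injective
  refine hW.1.eigenvectorBasis.toBasis.ext fun i => ?_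
  have hv : W *ᵥ S *ᵥ hW.1.eigenvectorBasis i =
      -(hW.1.eigenvalues i • S *ᵥ hW.1.eigenvectorBasis i) := by
    rw [mulVec_mulVec, ← neg_neg (W * S), ← h, neg_mulVec, ← mulVec_mulVec,
      hW.1.mulVec_eigenvectorBasis, mulVec_smul]
  simpa [toLpLin_apply] using hW.eq_zero_of_mulVec_eq_neg_smul (hW.eigenvalues_pos i).le hv

lemma PosDef.eq_conjTranspose_of_mul_eq_mul_conjTranspose [DecidableEq n] (hW : W.PosDef)
    {T : Matrix n n 𝕜} (h : T * W = W * Tᴴ) (h' : Tᴴ * W = W * T) : T = Tᴴ :=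
  sub_eq_zero.mp <| hW.eq_zero_of_mul_eq_neg_mul <| by
    rw [sub_mul, mul_sub, h, h', neg_sub]

end Matrix

theorem A_star_invariant_iff_eq_Ah_general (N : ℕ)
    (μ : Measure ℝ) (hμ : μ ≠ 0)
    (W : ℝ → Matrix (Fin N) (Fin N) ℂ)
    (hWpos : ∀ᵐ x ∂μ, (W x).PosDef) :
    (∀ T : Matrix (Fin N) (Fin N) ℂ,
        (∀ᵐ x ∂μ, T * W x = W x * Tᴴ) → (∀ᵐ x ∂μ, Tᴴ * W x = W x * T)) ↔
      (∀ T : Matrix (Fin N) (Fin N) ℂ,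
        (∀ᵐ x ∂μ, T * W x = W x * Tᴴ) ↔ (T = Tᴴ ∧ ∀ᵐ x ∂μ, T * W x = W x * T)) := by
  have : (ae μ).NeBot := ae_neBot.mpr hμ
  refine ⟨fun hstar T => ⟨fun hT => ?_, fun ⟨hTT, hcomm⟩ => ?_⟩, fun h T hT => ?_⟩
  · obtain ⟨x₀, hx₀, hx₀', hWx₀⟩ := (hT.and ((hstar T hT).and hWpos)).exists
    have hTT : T = Tᴴ := hWx₀.eq_conjTranspose_of_mul_eq_mul_conjTranspose hx₀ hx₀'
    exact ⟨hTT, hT.mono fun x hx => by rwa [← hTT] at hx⟩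
  · exact hcomm.mono fun x hx => by rwa [← hTT]
  · obtain ⟨hTT, hcomm⟩ := (h T).mp hT
    exact hcomm.mono fun x hx => by rwa [← hTT]

/-- For a matrix weight `(μ, W)` with `μ ≠ 0`: `𝒜` is `*`-invariant if and only if
`𝒜 = A_h`. -/
theorem A_star_invariant_iff_eq_Ah (N : ℕ) (hN : 1 ≤ N)
    (μ : Measure ℝ) [SigmaFinite μ] (hμ : μ ≠ 0)
    (W : ℝ → Matrix (Fin N) (Fin N) ℂ)
    (hWmeas : ∀ i j, Measurable fun x => W x i j)
    (hWpos : ∀ᵐ x ∂μ, (W x).PosDef) :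
    (∀ T : Matrix (Fin N) (Fin N) ℂ,
        (∀ᵐ x ∂μ, T * W x = W x * Tᴴ) → (∀ᵐ x ∂μ, Tᴴ * W x = W x * T)) ↔
      (∀ T : Matrix (Fin N) (Fin N) ℂ,
        (∀ᵐ x ∂μ, T * W x = W x * Tᴴ) ↔ (T = Tᴴ ∧ ∀ᵐ x ∂μ, T * W x = W x * T)) :=
  A_star_invariant_iff_eq_Ah_general N μ hμ W hWpos
end

section
/- Let (μ, W) be a matrix weight. Suppose there exist a Borel set X ⊆ ℝ and a real number c > 0 such that the function x ↦ W(x) is Bochner integrable over X with respect to μ and ∫_X W(x) dμ(x) = c·I, where I is the identity matrix. Then every T ∈ 𝒜 is Hermitian, and consequently T W(x) = W(x) T for μ-almost every x. -/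
open Matrix MeasureTheory ComplexOrder

attribute [local instance] Matrix.normedAddCommGroup Matrix.normedSpace

theorem ContinuousLinearMap.apply_integral_eq_of_ae_eq {α 𝕜 E F : Type*} [MeasurableSpace α]
    {μ : Measure α} [RCLike 𝕜] [NormedAddCommGroup E] [NormedSpace 𝕜 E] [NormedSpace ℝ E]
    [CompleteSpace E] [NormedAddCommGroup F] [NormedSpace 𝕜 F] [NormedSpace ℝ F]
    [CompleteSpace F] (L R : E →L[𝕜] F) {f : α → E} (hf : Integrable f μ)
    (h : ∀ᵐ x ∂μ, L (f x) = R (f x)) :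
    L (∫ x, f x ∂μ) = R (∫ x, f x ∂μ) := by
  rw [← L.integral_comp_comm hf, ← R.integral_comp_comm hf]
  exact integral_congr_ae h

theorem Matrix.eq_of_mul_smul_one_eq_smul_one_mul {K n : Type*} [Field K] [Fintype n]
    [DecidableEq n] {c : K} (hc : c ≠ 0) {T S : Matrix n n K}
    (h : T * (c • 1) = (c • 1) * S) : T = S := by
  rw [Matrix.mul_smul, Matrix.smul_mul, Matrix.mul_one, Matrix.one_mul] at h
  exact smul_right_injective _ hc h

theorem hermitian_of_integral_scalar_identity_general (N : ℕ)
    (μ : Measure ℝ)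
    (W : ℝ → Matrix (Fin N) (Fin N) ℂ)
    (X : Set ℝ)
    (hint : @IntegrableOn _ _ _ _ NormedAddCommGroup.toENormedAddCommMonoid.toContinuousENorm (fun x => W x) X μ)
    (c : ℝ) (hc : 0 < c)
    (hI : ∫ x in X, W x ∂μ = (c : ℂ) • (1 : Matrix (Fin N) (Fin N) ℂ))
    (T : Matrix (Fin N) (Fin N) ℂ)
    (hT : ∀ᵐ x ∂μ, T * W x = W x * Tᴴ) :
    T = Tᴴ ∧ (∀ᵐ x ∂μ, T * W x = W x * T) := by
  have hcomm : T * ∫ x in X, W x ∂μ = (∫ x in X, W x ∂μ) * Tᴴ :=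
    ContinuousLinearMap.apply_integral_eq_of_ae_eq
      (LinearMap.mulLeft ℂ T).toContinuousLinearMap
      (LinearMap.mulRight ℂ Tᴴ).toContinuousLinearMap hint (ae_restrict_of_ae hT)
  rw [hI] at hcomm
  have hself : T = Tᴴ :=
    Matrix.eq_of_mul_smul_one_eq_smul_one_mul (by exact_mod_cast hc.ne') hcomm
  refine ⟨hself, ?_⟩
  filter_upwards [hT] with x hx
  rw [hx, ← hself]

/-- If for a matrix weight `(μ, W)` there is a Borel set `X` and `c > 0` with
`∫_X W dμ = c • I`, then every `T ∈ 𝒜` is Hermitian and commutes with `W(x)` μ-a.e. -/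
theorem hermitian_of_integral_scalar_identity (N : ℕ) (hN : 1 ≤ N)
    (μ : Measure ℝ) [SigmaFinite μ]
    (W : ℝ → Matrix (Fin N) (Fin N) ℂ)
    (hWmeas : ∀ i j, Measurable fun x => W x i j)
    (hWpos : ∀ᵐ x ∂μ, (W x).PosDef)
    (X : Set ℝ) (hX : MeasurableSet X)
    (hint : @IntegrableOn _ _ _ _ NormedAddCommGroup.toENormedAddCommMonoid.toContinuousENorm (fun x => W x) X μ)
    (c : ℝ) (hc : 0 < c)
    (hI : ∫ x in X, W x ∂μ = (c : ℂ) • (1 : Matrix (Fin N) (Fin N) ℂ))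
    (T : Matrix (Fin N) (Fin N) ℂ)
    (hT : ∀ᵐ x ∂μ, T * W x = W x * Tᴴ) :
    T = Tᴴ ∧ (∀ᵐ x ∂μ, T * W x = W x * T) :=
  hermitian_of_integral_scalar_identity_general N μ W X hint c hc hI T hT
end

section
/- Let (μ, W) be a matrix weight with all moments finite, and let (P_n) be a monic orthogonal family for (μ, W), given by coefficients C_{n,k} ∈ M_N(ℂ) for 0 ≤ k ≤ n with C_{n,n} = I, such that each squared norm H_n = ∫ P_n(x) W(x) P_n(x)* dμ(x) is positive definite. Then for every T ∈ 𝒜 and every n, the polynomials T P_n and P_n T coincide, i.e., T C_{n,k} = C_{n,k} T for all 0 ≤ k ≤ n. -/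
/-!
Induction on `n`. As `P_n` is monic, `R = T P_n - P_n T` has degree `< n`, so
`R = ∑_{j<n} A_j P_j`. For `i < n` the induction hypothesis makes `T` commute with `P_i`, and with
`T W = W T*` this gives `⟨P_n T, P_i⟩ = ⟨P_n, P_i⟩ T* = 0`; hence
`0 = ⟨R, P_i⟩ = A_i H_i` by orthogonality, so `A_i = 0` because `H_i` is invertible, and `R = 0`.
-/

open Matrix MeasureTheory ComplexOrder

attribute [local instance] Matrix.normedAddCommGroup Matrix.normedSpace

/-- The evaluation at `x` of the matrix polynomial with coefficients `C 0, …, C n`. -/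
noncomputable def matrixPolyEval (N : ℕ) (C : ℕ → Matrix (Fin N) (Fin N) ℂ) (n : ℕ)
    (x : ℂ) : Matrix (Fin N) (Fin N) ℂ :=
  ∑ k ∈ Finset.range (n + 1), x ^ k • C k

open Finset

section MatrixIntegral

variable {α ι : Type*} [MeasurableSpace α] {μ : Measure α} {l m n p : Type*}
  [Fintype l] [Fintype m] [Fintype n] [Fintype p]

noncomputable def matrixMulLeftRightCLM (A : Matrix l m ℂ) (B : Matrix n p ℂ) :
    Matrix m n ℂ →L[ℝ] Matrix l p ℂ :=
  LinearMap.toContinuousLinearMap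
    { toFun := fun M => A * M * B
      map_add' := fun M₁ M₂ => by rw [Matrix.mul_add, Matrix.add_mul]
      map_smul' := fun c M => by rw [RingHom.id_apply, Matrix.mul_smul, Matrix.smul_mul] }

/- The norm topology on matrices is not reducibly the product topology, so `Integrable` has to
be given the norm's `ContinuousENorm` instance explicitly. -/
lemma MeasureTheory.Integrable.matrix_mul_mul {f : α → Matrix m n ℂ}
    (hf : @Integrable _ _ SeminormedAddGroup.toContinuousENorm _ _ f μ)
    (A : Matrix l m ℂ) (B : Matrix n p ℂ) :
    @Integrable _ _ SeminormedAddGroup.toContinuousENorm _ _ (fun x => A * f x * B) μ :=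
  (matrixMulLeftRightCLM A B).integrable_comp hf

lemma integral_matrix_mul_mul {f : α → Matrix m n ℂ}
    (hf : @Integrable _ _ SeminormedAddGroup.toContinuousENorm _ _ f μ)
    (A : Matrix l m ℂ) (B : Matrix n p ℂ) : ∫ x, A * f x * B ∂μ = A * (∫ x, f x ∂μ) * B :=
  (matrixMulLeftRightCLM A B).integral_comp_comm hf

lemma integral_sum_mul_mul_conjTranspose [DecidableEq p] (s : Finset ι) (A : ι → Matrix l m ℂ)
    (P : ι → α → Matrix m n ℂ) (W : α → Matrix n n ℂ) (Q : α → Matrix p n ℂ)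
    (hint : ∀ j ∈ s, @Integrable _ _ SeminormedAddGroup.toContinuousENorm _ _
      (fun x => P j x * W x * (Q x)ᴴ) μ) :
    ∫ x, (∑ j ∈ s, A j * P j x) * W x * (Q x)ᴴ ∂μ
      = ∑ j ∈ s, A j * ∫ x, P j x * W x * (Q x)ᴴ ∂μ := by
  calc ∫ x, (∑ j ∈ s, A j * P j x) * W x * (Q x)ᴴ ∂μ
      = ∫ x, ∑ j ∈ s, A j * (P j x * W x * (Q x)ᴴ) * (1 : Matrix p p ℂ) ∂μ := by
        simp only [Matrix.sum_mul, Matrix.mul_assoc, Matrix.mul_one]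
    _ = ∑ j ∈ s, ∫ x, A j * (P j x * W x * (Q x)ᴴ) * (1 : Matrix p p ℂ) ∂μ :=
        integral_finsetSum _ fun j hj => (hint j hj).matrix_mul_mul _ _
    _ = ∑ j ∈ s, A j * ∫ x, P j x * W x * (Q x)ᴴ ∂μ :=
        sum_congr rfl fun j hj => by rw [integral_matrix_mul_mul (hint j hj), Matrix.mul_one]

variable [DecidableEq n]

lemma integral_commutator_mul_mul_conjTranspose {T : Matrix n n ℂ} {W P Q : α → Matrix n n ℂ}
    (hT : ∀ᵐ x ∂μ, T * W x = W x * Tᴴ) (hQ : ∀ x, Commute T (Q x))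
    (hint : @Integrable _ _ SeminormedAddGroup.toContinuousENorm _ _
      (fun x => P x * W x * (Q x)ᴴ) μ) :
    ∫ x, (T * P x - P x * T) * W x * (Q x)ᴴ ∂μ
      = T * (∫ x, P x * W x * (Q x)ᴴ ∂μ) - (∫ x, P x * W x * (Q x)ᴴ ∂μ) * Tᴴ := by
  have hpoint : (fun x => (T * P x - P x * T) * W x * (Q x)ᴴ) =ᵐ[μ]
      fun x => T * (P x * W x * (Q x)ᴴ) * 1 - 1 * (P x * W x * (Q x)ᴴ) * Tᴴ := by
    filter_upwards [hT] with x hTx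
    have hTQ : Tᴴ * (Q x)ᴴ = (Q x)ᴴ * Tᴴ := by
      rw [← conjTranspose_mul, ← (hQ x).eq, conjTranspose_mul]
    calc (T * P x - P x * T) * W x * (Q x)ᴴ
        = T * (P x * W x * (Q x)ᴴ) - P x * (T * W x) * (Q x)ᴴ := by noncomm_ring
      _ = T * (P x * W x * (Q x)ᴴ) - P x * W x * (Tᴴ * (Q x)ᴴ) := by
        rw [hTx]; noncomm_ring
      _ = _ := by rw [hTQ]; noncomm_ring
  rw [integral_congr_ae hpoint, integral_sub (hint.matrix_mul_mul _ _) (hint.matrix_mul_mul _ _),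
    integral_matrix_mul_mul hint, integral_matrix_mul_mul hint, mul_one, one_mul]

end MatrixIntegral

section MatrixPolynomial

variable {N : ℕ}

lemma matrixPolyEval_succ (C : ℕ → Matrix (Fin N) (Fin N) ℂ) (n : ℕ) (x : ℂ) :
    matrixPolyEval N C (n + 1) x = matrixPolyEval N C n x + x ^ (n + 1) • C (n + 1) :=
  sum_range_succ _ _

lemma matrixPolyEval_commutator (T : Matrix (Fin N) (Fin N) ℂ) (C : ℕ → Matrix (Fin N) (Fin N) ℂ)
    (n : ℕ) (x : ℂ) :
    matrixPolyEval N (fun k => T * C k - C k * T) n x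
      = T * matrixPolyEval N C n x - matrixPolyEval N C n x * T := by
  simp only [matrixPolyEval, mul_sum, sum_mul, mul_smul_comm, smul_mul_assoc, smul_sub,
    sum_sub_distrib]

lemma commute_matrixPolyEval {T : Matrix (Fin N) (Fin N) ℂ} {C : ℕ → Matrix (Fin N) (Fin N) ℂ}
    {n : ℕ} (h : ∀ k ≤ n, Commute T (C k)) (x : ℂ) : Commute T (matrixPolyEval N C n x) :=
  Commute.sum_right _ _ _ fun k hk => (h k (Nat.lt_succ_iff.mp (mem_range.mp hk))).smul_right _

lemma conjTranspose_matrixPolyEval_ofReal (C : ℕ → Matrix (Fin N) (Fin N) ℂ) (n : ℕ) (x : ℝ) :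
    (matrixPolyEval N C n x)ᴴ = ∑ k ∈ range (n + 1), (x : ℂ) ^ k • (C k)ᴴ := by
  simp [matrixPolyEval, conjTranspose_sum, conjTranspose_smul, Complex.conj_ofReal]

lemma integrable_matrixPolyEval_mul_mul_conjTranspose {μ : Measure ℝ}
    {W : ℝ → Matrix (Fin N) (Fin N) ℂ}
    (hmom : ∀ k : ℕ, @Integrable _ _ SeminormedAddGroup.toContinuousENorm _ _
      (fun x : ℝ => (x : ℂ) ^ k • W x) μ)
    (C D : ℕ → Matrix (Fin N) (Fin N) ℂ) (n m : ℕ) :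
    @Integrable _ _ SeminormedAddGroup.toContinuousENorm _ _
      (fun x : ℝ => matrixPolyEval N C n x * W x * (matrixPolyEval N D m x)ᴴ) μ := by
  have hexpand : (fun x : ℝ => matrixPolyEval N C n x * W x * (matrixPolyEval N D m x)ᴴ)
      = fun x : ℝ => ∑ k ∈ range (n + 1), ∑ l ∈ range (m + 1),
          C k * ((x : ℂ) ^ (k + l) • W x) * (D l)ᴴ := by
    funext x
    rw [conjTranspose_matrixPolyEval_ofReal, matrixPolyEval, sum_mul, sum_mul]
    refine sum_congr rfl fun k _ => ?_
    rw [mul_sum]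
    refine sum_congr rfl fun l _ => ?_
    simp only [smul_mul_assoc, mul_smul_comm, smul_smul, pow_add, mul_comm]
  rw [hexpand]
  exact integrable_finsetSum _ fun k _ => integrable_finsetSum _ fun l _ =>
    (hmom (k + l)).matrix_mul_mul _ _

lemma exists_matrixPolyEval_eq_sum_mul {Pc : ℕ → ℕ → Matrix (Fin N) (Fin N) ℂ}
    (hmonic : ∀ j, Pc j j = 1) (n : ℕ) (D : ℕ → Matrix (Fin N) (Fin N) ℂ) (hD : D n = 0) :
    ∃ A : ℕ → Matrix (Fin N) (Fin N) ℂ, ∀ x,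
      matrixPolyEval N D n x = ∑ j ∈ range n, A j * matrixPolyEval N (Pc j) j x := by
  induction n generalizing D with
  | zero => exact ⟨0, fun x => by simp [matrixPolyEval, hD]⟩
  | succ n ih =>
    obtain ⟨A, hA⟩ := ih (fun k => D k - D n * Pc n k) (by simp [hmonic])
    refine ⟨Function.update A n (D n), fun x => ?_⟩
    have hsplit : matrixPolyEval N D n x = matrixPolyEval N (fun k => D k - D n * Pc n k) n x
        + D n * matrixPolyEval N (Pc n) n x := by
      simp only [matrixPolyEval, smul_sub, sum_sub_distrib, mul_sum, mul_smul_comm,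
        sub_add_cancel]
    rw [matrixPolyEval_succ, hD, smul_zero, add_zero, hsplit, hA, sum_range_succ,
      Function.update_self]
    congr 1
    exact sum_congr rfl fun j hj => by rw [Function.update_of_ne (mem_range.mp hj).ne]

lemma coeff_eq_zero_of_matrixPolyEval_eq_zero {D : ℕ → Matrix (Fin N) (Fin N) ℂ} {n : ℕ}
    (h : ∀ x, matrixPolyEval N D n x = 0) : ∀ k ≤ n, D k = 0 := by
  intro k hk
  ext i j
  set p : Polynomial ℂ := ∑ l ∈ range (n + 1), Polynomial.monomial l (D l i j)
  have hp : p = 0 := Polynomial.funext fun x => by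
    simpa [p, Polynomial.eval_finsetSum, matrixPolyEval, Matrix.sum_apply, mul_comm]
      using congr_fun (congr_fun (h x) i) j
  simpa [p, Polynomial.finsetSum_coeff, Polynomial.coeff_monomial, Nat.lt_succ_iff.mpr hk]
    using congr_arg (Polynomial.coeff · k) hp

end MatrixPolynomial

theorem T_commutes_with_monic_orthogonal_polynomials_general (N : ℕ)
    (μ : Measure ℝ)
    (W : ℝ → Matrix (Fin N) (Fin N) ℂ)
    (hmom : ∀ n : ℕ, @Integrable _ _ SeminormedAddGroup.toContinuousENorm _ _
      (fun x : ℝ => (x : ℂ) ^ n • W x) μ)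
    (Pc : ℕ → ℕ → Matrix (Fin N) (Fin N) ℂ)
    (hmonic : ∀ n, Pc n n = 1)
    (horth : ∀ n m, n ≠ m →
      (∫ x : ℝ, matrixPolyEval N (Pc n) n (x : ℂ) * W x *
        (matrixPolyEval N (Pc m) m (x : ℂ))ᴴ ∂μ) = 0)
    (hHpos : ∀ n, (∫ x : ℝ, matrixPolyEval N (Pc n) n (x : ℂ) * W x *
        (matrixPolyEval N (Pc n) n (x : ℂ))ᴴ ∂μ).PosDef)
    (T : Matrix (Fin N) (Fin N) ℂ)
    (hT : ∀ᵐ x ∂μ, T * W x = W x * Tᴴ) :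
    ∀ n, ∀ k ≤ n, T * Pc n k = Pc n k * T := by
  intro n
  induction n using Nat.strong_induction_on with
  | _ n ih =>
  have hint := integrable_matrixPolyEval_mul_mul_conjTranspose hmom
  obtain ⟨A, hA⟩ := exists_matrixPolyEval_eq_sum_mul hmonic n
    (fun k => T * Pc n k - Pc n k * T) (by simp [hmonic])
  have hA_zero : ∀ i < n, A i = 0 := by
    intro i hi
    have hpair := integral_commutator_mul_mul_conjTranspose hT
      (fun x => commute_matrixPolyEval (fun k hk => ih i hi k hk) x) (hint (Pc n) (Pc i) n i)
    simp only [← matrixPolyEval_commutator, hA] at hpair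
    rw [integral_sum_mul_mul_conjTranspose _ _ _ _ _ fun j _ => hint _ _ _ _,
      sum_eq_single_of_mem i (mem_range.2 hi) fun j _ hji => by rw [horth j i hji, mul_zero],
      horth n i hi.ne', mul_zero, zero_mul, sub_zero] at hpair
    exact (hHpos i).isUnit.mul_left_eq_zero.mp hpair
  refine fun k hk => sub_eq_zero.mp (coeff_eq_zero_of_matrixPolyEval_eq_zero
    (D := fun k => T * Pc n k - Pc n k * T) (fun x => ?_) k hk)
  rw [hA x]
  exact sum_eq_zero fun j hj => by rw [hA_zero j (mem_range.mp hj), zero_mul]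

/-- For a matrix weight with all moments finite and a monic orthogonal family `(P_n)`
with positive definite squared norms, every `T ∈ 𝒜` satisfies `T P_n = P_n T`,
i.e. `T` commutes with all coefficients of `P_n`. -/
theorem T_commutes_with_monic_orthogonal_polynomials (N : ℕ) (hN : 1 ≤ N)
    (μ : Measure ℝ) [SigmaFinite μ]
    (W : ℝ → Matrix (Fin N) (Fin N) ℂ)
    (hWmeas : ∀ i j, Measurable fun x => W x i j)
    (hWpos : ∀ᵐ x ∂μ, (W x).PosDef)
    (hmom : ∀ n : ℕ, @Integrable _ _ SeminormedAddGroup.toContinuousENorm _ _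
      (fun x : ℝ => (x : ℂ) ^ n • W x) μ)
    (Pc : ℕ → ℕ → Matrix (Fin N) (Fin N) ℂ)
    (hmonic : ∀ n, Pc n n = 1)
    (horth : ∀ n m, n ≠ m →
      (∫ x : ℝ, matrixPolyEval N (Pc n) n (x : ℂ) * W x *
        (matrixPolyEval N (Pc m) m (x : ℂ))ᴴ ∂μ) = 0)
    (hHpos : ∀ n, (∫ x : ℝ, matrixPolyEval N (Pc n) n (x : ℂ) * W x *
        (matrixPolyEval N (Pc n) n (x : ℂ))ᴴ ∂μ).PosDef)
    (T : Matrix (Fin N) (Fin N) ℂ)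
    (hT : ∀ᵐ x ∂μ, T * W x = W x * Tᴴ) :
    ∀ n, ∀ k ≤ n, T * Pc n k = Pc n k * T :=
  T_commutes_with_monic_orthogonal_polynomials_general N μ W hmom Pc hmonic horth hHpos T hT
end

section
/- Let (μ, W) be a matrix weight and let Γ : ℕ → M_N(ℂ) be a sequence of positive definite matrices such that every T ∈ 𝒜 satisfies T Γ_n = Γ_n T* for all n ∈ ℕ. Suppose there is a nonempty subset I ⊆ ℕ such that 𝒜^Γ_I = { T ∈ M_N(ℂ) : T Γ_n = Γ_n T* for all n ∈ I } is *-invariant, i.e., T ∈ 𝒜^Γ_I implies T* ∈ 𝒜^Γ_I. Then 𝒜 = A_h: for every T ∈ M_N(ℂ), T W(x) = W(x) T* for μ-almost every x if and only if T = T* and T W(x) = W(x) T for μ-almost every x. -/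
open Matrix MeasureTheory ComplexOrder

/-!
If `T ∈ 𝒜`, then `T Γₙ = Γₙ Tᴴ` for every `n`, and `*`-invariance of `𝒜^Γ_I` adds `Tᴴ Γₙ = Γₙ T`
for some `n ∈ I`. Then `S = T - Tᴴ` is skew-Hermitian and anticommutes with the positive definite
`G = Γₙ`, so `tr (S G S)` equals both `tr (G S S)` (cyclicity) and `-tr (G S S)`. Hence the
positive semidefinite `S G Sᴴ = -S G S` has trace zero, so it vanishes, and positivity of `G`
forces `S = 0`.
-/

namespace Matrix

variable {m n 𝕜 : Type*} [Fintype m] [Fintype n] [RCLike 𝕜]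

theorem PosDef.eq_zero_of_mul_mul_conjTranspose_eq_zero {G : Matrix n n 𝕜} {B : Matrix m n 𝕜}
    (hG : G.PosDef) (h : B * G * Bᴴ = 0) : B = 0 := by
  have hmulVec : ∀ x, Bᴴ *ᵥ x = 0 := fun x => by
    by_contra hx
    have := hG.dotProduct_mulVec_pos hx
    rwa [star_mulVec, conjTranspose_conjTranspose, ← dotProduct_mulVec, mulVec_mulVec,
      mulVec_mulVec, h, zero_mulVec, dotProduct_zero, lt_self_iff_false] at this
  classical
  rw [← conjTranspose_eq_zero]
  exact ext_of_mulVec_single fun i => by rw [hmulVec, zero_mulVec]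

theorem PosDef.eq_zero_of_anticommute {G A : Matrix n n 𝕜} (hG : G.PosDef) (hA : Aᴴ = -A)
    (hAG : A * G = -(G * A)) : A = 0 := by
  have htrace : (A * G * Aᴴ).trace = 0 := by
    have h : (A * G * Aᴴ).trace = -(A * G * Aᴴ).trace := by
      calc (A * G * Aᴴ).trace = -(A * (G * A)).trace := by simp [hA, Matrix.mul_assoc]
        _ = -(G * A * A).trace := by rw [trace_mul_comm, Matrix.mul_assoc]
        _ = -(A * G * Aᴴ).trace := by simp [hA, hAG, Matrix.mul_assoc]
    linear_combination h / 2
  exact hG.eq_zero_of_mul_mul_conjTranspose_eq_zero <|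
    (hG.posSemidef.mul_mul_conjTranspose_same A).trace_eq_zero_iff.mp htrace

theorem PosDef.isHermitian_of_mul_eq_mul_conjTranspose {G T : Matrix n n 𝕜} (hG : G.PosDef)
    (hT : T * G = G * Tᴴ) (hTH : Tᴴ * G = G * T) : T.IsHermitian := by
  have hskew : (T - Tᴴ)ᴴ = -(T - Tᴴ) := by simp
  have hanti : (T - Tᴴ) * G = -(G * (T - Tᴴ)) := by
    rw [sub_mul, mul_sub, hT, hTH, neg_sub]
  exact (sub_eq_zero.mp (hG.eq_zero_of_anticommute hskew hanti)).symm

end Matrix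

theorem A_eq_Ah_of_starInvariant_AGamma_general (N : ℕ)
    (μ : Measure ℝ)
    (W : ℝ → Matrix (Fin N) (Fin N) ℂ)
    (Γ : ℕ → Matrix (Fin N) (Fin N) ℂ)
    (hΓpos : ∀ n, (Γ n).PosDef)
    (hΓ : ∀ T : Matrix (Fin N) (Fin N) ℂ,
      (∀ᵐ x ∂μ, T * W x = W x * Tᴴ) → ∀ n, T * Γ n = Γ n * Tᴴ)
    (I : Set ℕ) (hI : I.Nonempty)
    (hstar : ∀ T : Matrix (Fin N) (Fin N) ℂ,
      (∀ n ∈ I, T * Γ n = Γ n * Tᴴ) → (∀ n ∈ I, Tᴴ * Γ n = Γ n * T)) :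
    ∀ T : Matrix (Fin N) (Fin N) ℂ,
      (∀ᵐ x ∂μ, T * W x = W x * Tᴴ) ↔
        (T = Tᴴ ∧ ∀ᵐ x ∂μ, T * W x = W x * T) := by
  intro T
  constructor
  · intro hT
    obtain ⟨n, hn⟩ := hI
    have hTΓ : ∀ k, T * Γ k = Γ k * Tᴴ := hΓ T hT
    have hTH : T = Tᴴ := ((hΓpos n).isHermitian_of_mul_eq_mul_conjTranspose (hTΓ n)
      (hstar T (fun k _ => hTΓ k) n hn)).symm
    exact ⟨hTH, hT.mono fun x hx => hx.trans (by rw [← hTH])⟩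
  · rintro ⟨hTH, hT⟩
    exact hT.mono fun x hx => hx.trans (by rw [← hTH])

/-- Let `(μ, W)` be a matrix weight and `Γ` a sequence of positive definite matrices
such that `T Γₙ = Γₙ Tᴴ` for every `T ∈ 𝒜` and every `n`. If for some nonempty
`I ⊆ ℕ` the set `𝒜^Γ_I = {T : T Γₙ = Γₙ Tᴴ ∀ n ∈ I}` is `*`-invariant, then
`𝒜 = A_h`. -/
theorem A_eq_Ah_of_starInvariant_AGamma (N : ℕ) (hN : 1 ≤ N)
    (μ : Measure ℝ) [SigmaFinite μ]
    (W : ℝ → Matrix (Fin N) (Fin N) ℂ)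
    (hWmeas : ∀ i j, Measurable fun x => W x i j)
    (hWpos : ∀ᵐ x ∂μ, (W x).PosDef)
    (Γ : ℕ → Matrix (Fin N) (Fin N) ℂ)
    (hΓpos : ∀ n, (Γ n).PosDef)
    (hΓ : ∀ T : Matrix (Fin N) (Fin N) ℂ,
      (∀ᵐ x ∂μ, T * W x = W x * Tᴴ) → ∀ n, T * Γ n = Γ n * Tᴴ)
    (I : Set ℕ) (hI : I.Nonempty)
    (hstar : ∀ T : Matrix (Fin N) (Fin N) ℂ,
      (∀ n ∈ I, T * Γ n = Γ n * Tᴴ) → (∀ n ∈ I, Tᴴ * Γ n = Γ n * T)) :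
    ∀ T : Matrix (Fin N) (Fin N) ℂ,
      (∀ᵐ x ∂μ, T * W x = W x * Tᴴ) ↔
        (T = Tᴴ ∧ ∀ᵐ x ∂μ, T * W x = W x * T) :=
  A_eq_Ah_of_starInvariant_AGamma_general N μ W Γ hΓpos hΓ I hI hstar
end

section
/- Let (μ, W) be a matrix weight, let Γ ∈ M_N(ℂ) be positive definite such that every T ∈ 𝒜(W) satisfies T Γ = Γ T*, and let S be the positive definite matrix with S² = Γ. Then for every T ∈ 𝒜(W), the matrix S⁻¹ T S is Hermitian. Consequently, if μ ≠ 0, every element of 𝒜(S⁻¹ W S⁻¹) is Hermitian and 𝒜(S⁻¹ W S⁻¹) = A(S⁻¹ W S⁻¹)_h. -/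
open Matrix MeasureTheory ComplexOrder

/-- Let `(μ, W)` be a matrix weight, `Γ` positive definite with `T Γ = Γ Tᴴ` for all
`T ∈ 𝒜(W)`, and `S` positive definite with `S² = Γ`. Then `S⁻¹ T S` is Hermitian for
every `T ∈ 𝒜(W)`; consequently, if `μ ≠ 0`, every element of `𝒜(S⁻¹ W S⁻¹)` is
Hermitian and `𝒜(S⁻¹ W S⁻¹) = A(S⁻¹ W S⁻¹)_h`. -/
theorem conjugated_A_hermitian (N : ℕ) (hN : 1 ≤ N)
    (μ : Measure ℝ) [SigmaFinite μ]
    (W : ℝ → Matrix (Fin N) (Fin N) ℂ)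
    (hWmeas : ∀ i j, Measurable fun x => W x i j)
    (hWpos : ∀ᵐ x ∂μ, (W x).PosDef)
    (Γ : Matrix (Fin N) (Fin N) ℂ) (hΓ : Γ.PosDef)
    (hΓA : ∀ T : Matrix (Fin N) (Fin N) ℂ,
      (∀ᵐ x ∂μ, T * W x = W x * Tᴴ) → T * Γ = Γ * Tᴴ)
    (S : Matrix (Fin N) (Fin N) ℂ) (hS : S.PosDef) (hSΓ : S * S = Γ) :
    (∀ T : Matrix (Fin N) (Fin N) ℂ,
      (∀ᵐ x ∂μ, T * W x = W x * Tᴴ) → (S⁻¹ * T * S)ᴴ = S⁻¹ * T * S) ∧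
    (μ ≠ 0 →
      (∀ T : Matrix (Fin N) (Fin N) ℂ,
        (∀ᵐ x ∂μ, T * (S⁻¹ * W x * S⁻¹) = (S⁻¹ * W x * S⁻¹) * Tᴴ) → T = Tᴴ) ∧
      (∀ T : Matrix (Fin N) (Fin N) ℂ,
        (∀ᵐ x ∂μ, T * (S⁻¹ * W x * S⁻¹) = (S⁻¹ * W x * S⁻¹) * Tᴴ) ↔
          (T = Tᴴ ∧ ∀ᵐ x ∂μ, T * (S⁻¹ * W x * S⁻¹) = (S⁻¹ * W x * S⁻¹) * T))) := by
  have hSH : Sᴴ = S := hS.isHermitian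
  have hSu : IsUnit S := hS.isUnit
  have hSd : IsUnit S.det := (Matrix.isUnit_iff_isUnit_det S).mp hSu
  have hinv1 : S⁻¹ * S = 1 := Matrix.nonsing_inv_mul S hSd
  have hinv2 : S * S⁻¹ = 1 := Matrix.mul_nonsing_inv S hSd
  have hSiH : (S⁻¹)ᴴ = S⁻¹ := by
    rw [Matrix.conjTranspose_nonsing_inv, hSH]
  -- key part 1
  have key : ∀ T : Matrix (Fin N) (Fin N) ℂ,
      (∀ᵐ x ∂μ, T * W x = W x * Tᴴ) → (S⁻¹ * T * S)ᴴ = S⁻¹ * T * S := by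
    intro T hT
    have h := hΓA T hT
    rw [← hSΓ] at h
    have h2 : S⁻¹ * (T * (S * S)) * S⁻¹ = S⁻¹ * (S * S * Tᴴ) * S⁻¹ := by rw [h]
    have h3 : S⁻¹ * T * S = S * Tᴴ * S⁻¹ := by
      calc S⁻¹ * T * S = S⁻¹ * (T * (S * S)) * S⁻¹ := by
            rw [show S⁻¹ * (T * (S * S)) * S⁻¹ = S⁻¹ * T * S * (S * S⁻¹) by simp only [mul_assoc], hinv2, mul_one]
        _ = S⁻¹ * (S * S * Tᴴ) * S⁻¹ := h2
        _ = S * Tᴴ * S⁻¹ := by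
            rw [show S⁻¹ * (S * S * Tᴴ) * S⁻¹ = (S⁻¹ * S) * (S * Tᴴ * S⁻¹) by simp only [mul_assoc], hinv1,
              one_mul]
    rw [Matrix.conjTranspose_mul, Matrix.conjTranspose_mul, hSH, hSiH, ← mul_assoc, h3]
  refine ⟨key, fun _ => ?_⟩
  have herm : ∀ T : Matrix (Fin N) (Fin N) ℂ,
      (∀ᵐ x ∂μ, T * (S⁻¹ * W x * S⁻¹) = (S⁻¹ * W x * S⁻¹) * Tᴴ) → T = Tᴴ := by
    intro T hT
    have hU : ∀ᵐ x ∂μ, (S * T * S⁻¹) * W x = W x * (S * T * S⁻¹)ᴴ := by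
      filter_upwards [hT] with x hx
      rw [Matrix.conjTranspose_mul, Matrix.conjTranspose_mul, hSH, hSiH]
      have h2 : S * (T * (S⁻¹ * W x * S⁻¹)) * S = S * ((S⁻¹ * W x * S⁻¹) * Tᴴ) * S := by
        rw [hx]
      calc S * T * S⁻¹ * W x
          = S * (T * (S⁻¹ * W x * S⁻¹)) * S := by
            rw [show S * (T * (S⁻¹ * W x * S⁻¹)) * S = S * T * S⁻¹ * W x * (S⁻¹ * S) by simp only [mul_assoc],
              hinv1, mul_one]
        _ = S * ((S⁻¹ * W x * S⁻¹) * Tᴴ) * S := h2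
        _ = W x * (S⁻¹ * (Tᴴ * S)) := by
            rw [show S * ((S⁻¹ * W x * S⁻¹) * Tᴴ) * S = (S * S⁻¹) * (W x * (S⁻¹ * (Tᴴ * S)))
              by simp only [mul_assoc], hinv2, one_mul]
    have h := key (S * T * S⁻¹) hU
    have hTeq : S⁻¹ * (S * T * S⁻¹) * S = T := by
      rw [show S⁻¹ * (S * T * S⁻¹) * S = (S⁻¹ * S) * (T * (S⁻¹ * S)) by simp only [mul_assoc],
        hinv1, one_mul, mul_one]
    rw [hTeq] at h
    exact h.symm
  refine ⟨herm, fun T => ⟨fun hT => ⟨herm T hT, ?_⟩, fun ⟨hTh, hc⟩ => ?_⟩⟩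
  · filter_upwards [hT] with x hx
    rw [hx, ← herm T hT]
  · filter_upwards [hc] with x hx
    rw [hx, ← hTh]
end

section
/- Let (μ, W) be a matrix weight with all moments finite and μ ≠ 0, and suppose that for some n ∈ ℕ and some real c > 0 the even moment satisfies M_{2n} = ∫ x^{2n} W(x) dμ(x) = c·I. Then every T ∈ 𝒜 is Hermitian, and hence 𝒜 = A_h: for every T, T W(x) = W(x) T* μ-almost everywhere if and only if T = T* and T W(x) = W(x) T μ-almost everywhere. -/
open Matrix MeasureTheory ComplexOrder

attribute [local instance] Matrix.normedAddCommGroup Matrix.normedSpace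

/-! Integrating `T W(x) = W(x) T*` against `x^{2n} dμ` gives `T M_{2n} = M_{2n} T*`; since
`M_{2n}` is a nonzero multiple of the identity, this forces `T = T*`, and then `T ∈ 𝒜` reads
`T W(x) = W(x) T`. -/

namespace Matrix

/- `Integrable` is given its `ContinuousENorm` explicitly: instance search does not find it, since
the topology of `Matrix.normedAddCommGroup` is not reducibly the product topology of `Matrix`. -/

variable {X ι 𝕜 : Type*} [MeasurableSpace X] {μ : Measure X} [Fintype ι] [DecidableEq ι]
  [RCLike 𝕜]

theorem mul_integral_eq_integral_mul_of_ae {F : X → Matrix ι ι 𝕜} {T S : Matrix ι ι 𝕜}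
    (hF : @Integrable _ _ SeminormedAddGroup.toContinuousENorm _ _ F μ)
    (h : ∀ᵐ x ∂μ, T * F x = F x * S) :
    T * ∫ x, F x ∂μ = (∫ x, F x ∂μ) * S := by
  calc T * ∫ x, F x ∂μ
      = ∫ x, T * F x ∂μ :=
        ((LinearMap.mulLeft 𝕜 T).toContinuousLinearMap.integral_comp_comm hF).symm
    _ = ∫ x, F x * S ∂μ := integral_congr_ae h
    _ = (∫ x, F x ∂μ) * S :=
        (LinearMap.mulRight 𝕜 S).toContinuousLinearMap.integral_comp_comm hF

theorem eq_of_ae_mul_eq_mul_of_integral_smul_eq_smul_one {W : X → Matrix ι ι 𝕜} {g : X → 𝕜}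
    {T S : Matrix ι ι 𝕜} {c : 𝕜}
    (hgW : @Integrable _ _ SeminormedAddGroup.toContinuousENorm _ _ (fun x => g x • W x) μ)
    (hM : ∫ x, g x • W x ∂μ = c • 1) (hc : c ≠ 0) (hT : ∀ᵐ x ∂μ, T * W x = W x * S) :
    T = S := by
  have hTM : T * ∫ x, g x • W x ∂μ = (∫ x, g x • W x ∂μ) * S := by
    refine mul_integral_eq_integral_mul_of_ae hgW ?_
    filter_upwards [hT] with x hx
    rw [mul_smul_comm, smul_mul_assoc, hx]
  rw [hM, mul_smul_comm, smul_mul_assoc, mul_one, one_mul] at hTM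
  exact smul_right_injective _ hc hTM

end Matrix

theorem A_eq_Ah_of_even_moment_scalar_general (N : ℕ)
    (μ : Measure ℝ)
    (W : ℝ → Matrix (Fin N) (Fin N) ℂ)
    (hmom : ∀ n : ℕ, @Integrable (Matrix (Fin N) (Fin N) ℂ) _ SeminormedAddGroup.toContinuousENorm _ _ (fun x : ℝ => (x : ℂ) ^ n • W x) μ)
    (n : ℕ) (c : ℝ) (hc : 0 < c)
    (hM : (∫ x : ℝ, (x : ℂ) ^ (2 * n) • W x ∂μ) =
      (c : ℂ) • (1 : Matrix (Fin N) (Fin N) ℂ)) :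
    (∀ T : Matrix (Fin N) (Fin N) ℂ,
      (∀ᵐ x ∂μ, T * W x = W x * Tᴴ) → T = Tᴴ) ∧
    (∀ T : Matrix (Fin N) (Fin N) ℂ,
      (∀ᵐ x ∂μ, T * W x = W x * Tᴴ) ↔
        (T = Tᴴ ∧ ∀ᵐ x ∂μ, T * W x = W x * T)) := by
  have hermitian : ∀ T : Matrix (Fin N) (Fin N) ℂ,
      (∀ᵐ x ∂μ, T * W x = W x * Tᴴ) → T = Tᴴ := fun T hT =>
    eq_of_ae_mul_eq_mul_of_integral_smul_eq_smul_one (hmom (2 * n)) hM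
      (by exact_mod_cast hc.ne') hT
  refine ⟨hermitian, fun T => ⟨fun hT => ⟨hermitian T hT, ?_⟩, fun ⟨hTh, hTW⟩ => ?_⟩⟩
  · filter_upwards [hT] with x hx
    rw [hx, ← hermitian T hT]
  · filter_upwards [hTW] with x hx
    rw [hx, ← hTh]

/-- If a matrix weight `(μ, W)` with all moments finite and `μ ≠ 0` has some even moment
`M_{2n} = c • I` with `c > 0`, then every `T ∈ 𝒜` is Hermitian and `𝒜 = A_h`. -/
theorem A_eq_Ah_of_even_moment_scalar (N : ℕ) (hN : 1 ≤ N)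
    (μ : Measure ℝ) [SigmaFinite μ] (hμ : μ ≠ 0)
    (W : ℝ → Matrix (Fin N) (Fin N) ℂ)
    (hWmeas : ∀ i j, Measurable fun x => W x i j)
    (hWpos : ∀ᵐ x ∂μ, (W x).PosDef)
    (hmom : ∀ n : ℕ, @Integrable (Matrix (Fin N) (Fin N) ℂ) _ SeminormedAddGroup.toContinuousENorm _ _ (fun x : ℝ => (x : ℂ) ^ n • W x) μ)
    (n : ℕ) (c : ℝ) (hc : 0 < c)
    (hM : (∫ x : ℝ, (x : ℂ) ^ (2 * n) • W x ∂μ) =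
      (c : ℂ) • (1 : Matrix (Fin N) (Fin N) ℂ)) :
    (∀ T : Matrix (Fin N) (Fin N) ℂ,
      (∀ᵐ x ∂μ, T * W x = W x * Tᴴ) → T = Tᴴ) ∧
    (∀ T : Matrix (Fin N) (Fin N) ℂ,
      (∀ᵐ x ∂μ, T * W x = W x * Tᴴ) ↔
        (T = Tᴴ ∧ ∀ᵐ x ∂μ, T * W x = W x * T)) :=
  A_eq_Ah_of_even_moment_scalar_general N μ W hmom n c hc hM
end
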